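/- Let G and H be finitely generated torsion-free nilpotent groups and let T ⊆ H be a subset generating a finite-index subgroup of H. Let Ψ₁, Ψ₂ : Pol(G) → Pol(H) be ℝ-linear maps each of which is: strongly unital (it sends the constant function 1 to the constant function 1, and Ψ_k(ξ)(1_H) = 0 whenever ξ(1_G) = 0); multiplicative (Ψ_k(ξ·η) = Ψ_k(ξ)·Ψ_k(η) for the pointwise products); degree-preserving (Ψ_k(Pol_d(G)) ⊆ Pol_d(H) for all d ∈ ℕ); and co-multiplicative, meaning that for every ξ ∈ Pol(G) there exist finitely many ξ₁, …, ξ_n, ξ₁', …, ξ_n' ∈ Pol(G) such that ξ(g·g') = Σᵢ ξᵢ(g)·ξᵢ'(g') for all g, g' ∈ G and Ψ_k(ξ)(h·h') = Σᵢ Ψ_k(ξᵢ)(h)·Ψ_k(ξᵢ')(h') for all h, h' ∈ H. If Ψ₁(ξ)(t) = Ψ₂(ξ)(t) for every ξ ∈ Pol(G) and every t ∈ T, then Ψ₁ = Ψ₂. (Uniqueness of co-multiplicative degree-preserving algebra homomorphisms of polynomial algebras; in the paper T is the set of degree-one elements of a Mal'cev basis of H, which generates a finite-index subgroup.) -/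

import Mathlib

/-!
Both maps preserve degrees, so for polynomial `ξ` the difference `Ψ₁ ξ - Ψ₂ ξ` is a polynomial
map on `H`, and along each cyclic subgroup `n ↦ hⁿ` it is a polynomial sequence on `ℤ`; such a
sequence vanishing at all non-negative multiples of some `m ≠ 0` vanishes identically.

Co-multiplicativity makes the set of points where `Ψ₁` and `Ψ₂` agree on all of `Pol(G)` closed
under products. This needs that `Ψ ξ (h h')` may be computed from *any* decomposition
`ξ (g g') = ∑ aᵢ g bᵢ g'`, i.e. the injectivity of `Pol(G) ⊗ Pol(G) → (G × G → ℝ)`.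
By the fact on sequences, the set is closed under inverses and contains `h` as soon as it
contains some `hᵐ`, `m ≠ 0`. It contains `T`, hence `⟨T⟩`, and every `h ∈ H` has a power in `⟨T⟩`.
-/

/-- Torsion-free monoid (the older Mathlib definition, since removed):
no nontrivial element has finite order. -/
def Monoid.IsTorsionFree (G : Type*) [Monoid G] : Prop :=
  ∀ g : G, g ≠ 1 → ¬IsOfFinOrder g

/-- The left difference operator: `(∂_g ξ)(h) = ξ(g⁻¹h) - ξ(h)`. -/
def lDiff {G : Type*} [Group G] (g : G) (ξ : G → ℝ) : G → ℝ :=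
  fun h => ξ (g⁻¹ * h) - ξ h

/-- `ξ` is a polynomial map of degree at most `d`. -/
def IsPolyLe {G : Type*} [Group G] (d : ℕ) (ξ : G → ℝ) : Prop :=
  ∀ gs : List G, gs.length = d + 1 → gs.foldr lDiff ξ = 0

/-- `ξ ∈ Pol(G)`: `ξ` is a polynomial map of some finite degree. -/
def IsPolyMap {G : Type*} [Group G] (ξ : G → ℝ) : Prop :=
  ∃ d : ℕ, IsPolyLe d ξ

/-- `Ψ` is a strongly unital, multiplicative, degree-preserving, co-multiplicative
`ℝ`-linear map `Pol(G) → Pol(H)` (recorded via its action on polynomial maps). -/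
def IsGoodHom {G H : Type*} [Group G] [Group H] (Ψ : (G → ℝ) → (H → ℝ)) : Prop :=
  -- ℝ-linearity on polynomial maps
  (∀ ξ η : G → ℝ, IsPolyMap ξ → IsPolyMap η → Ψ (ξ + η) = Ψ ξ + Ψ η) ∧
  (∀ (c : ℝ) (ξ : G → ℝ), IsPolyMap ξ → Ψ (c • ξ) = c • Ψ ξ) ∧
  -- strongly unital
  (Ψ 1 = 1) ∧
  (∀ ξ : G → ℝ, IsPolyMap ξ → ξ 1 = 0 → Ψ ξ 1 = 0) ∧
  -- multiplicative
  (∀ ξ η : G → ℝ, IsPolyMap ξ → IsPolyMap η → Ψ (ξ * η) = Ψ ξ * Ψ η) ∧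
  -- degree-preserving
  (∀ (d : ℕ) (ξ : G → ℝ), IsPolyLe d ξ → IsPolyLe d (Ψ ξ)) ∧
  -- co-multiplicative
  (∀ ξ : G → ℝ, IsPolyMap ξ → ∃ (n : ℕ) (a b : Fin n → (G → ℝ)),
    (∀ i, IsPolyMap (a i)) ∧ (∀ i, IsPolyMap (b i)) ∧
    (∀ g g' : G, ξ (g * g') = ∑ i, a i g * b i g') ∧
    (∀ h h' : H, Ψ ξ (h * h') = ∑ i, Ψ (a i) h * Ψ (b i) h'))


open fwdDiff

section FwdDiff

variable {A : Type*} [AddCommGroup A]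

theorem fwdDiff_comm {M : Type*} [AddCommMonoid M] (h h' : M) :
    Function.Commute (fwdDiff h : (M → A) → M → A) (fwdDiff h') := fun f => by
  funext y
  simp only [fwdDiff, add_right_comm y h h']
  abel

theorem apply_eq_apply_zero_of_fwdDiff_eq_zero {ψ : ℤ → A} (hψ : Δ_[1] ψ = 0) (n : ℤ) :
    ψ n = ψ 0 := by
  have hper : Function.Periodic ψ 1 := fun n => sub_eq_zero.1 (congrFun hψ n)
  simpa using hper.zsmul_eq n

variable [IsAddTorsionFree A]

theorem fwdDiff_eq_zero_of_periodic {ψ : ℤ → A} {m : ℕ} (hm : m ≠ 0)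
    (hper : Function.Periodic ψ m) {d : ℕ} (hψ : (Δ_[1])^[d + 1] ψ = 0) : Δ_[1] ψ = 0 := by
  induction d generalizing ψ with
  | zero => simpa using hψ
  | succ d ih =>
    have hper' : Function.Periodic (Δ_[1] ψ) m := fun n => by
      simp only [fwdDiff]
      rw [add_right_comm, hper, hper]
    have hconst := apply_eq_apply_zero_of_fwdDiff_eq_zero
      (ih hper' (by rwa [← Function.iterate_succ_apply]))
    have htelescope : ψ m - ψ 0 = m • Δ_[1] ψ 0 := calc
      ψ m - ψ 0 = ∑ i ∈ Finset.range m, Δ_[1] ψ i := by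
        simpa [fwdDiff] using (Finset.sum_range_sub (fun i : ℕ => ψ i) m).symm
      _ = m • Δ_[1] ψ 0 := by simp [hconst]
    have hzero : m • Δ_[1] ψ 0 = 0 := by
      rw [← htelescope, sub_eq_zero]
      simpa using hper 0
    funext n
    rw [hconst n, (nsmul_eq_zero_iff_right hm).1 hzero, Pi.zero_apply]

theorem eq_zero_of_fwdDiff_iter_eq_zero {ψ : ℤ → A} {m : ℕ} (hm : m ≠ 0)
    (hzero : ∀ k : ℕ, ψ (m * k) = 0) {d : ℕ} (hψ : (Δ_[1])^[d + 1] ψ = 0) : ψ = 0 := by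
  induction d generalizing ψ with
  | zero =>
    funext n
    rw [apply_eq_apply_zero_of_fwdDiff_eq_zero (ψ := ψ) (by simpa using hψ) n]
    simpa using hzero 0
  | succ d ih =>
    -- `Δ_[m] ψ` has lower degree and vanishes on `m ℕ` too, so `ψ` is `m`-periodic.
    have hconst := apply_eq_apply_zero_of_fwdDiff_eq_zero
      ((Function.iterate_succ_apply' _ _ _).symm.trans hψ)
    have hdiff : Δ_[(m : ℤ)] ψ = 0 := by
      refine ih (fun k => ?_) ?_
      · simp only [fwdDiff]
        rw [← mul_add_one, ← Nat.cast_succ, hzero, hzero, sub_zero]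
      · rw [(fwdDiff_comm 1 (m : ℤ)).iterate_left (d + 1) ψ]
        funext n
        simp [fwdDiff, hconst]
    have hper : Function.Periodic ψ m := fun n => sub_eq_zero.1 (congrFun hdiff n)
    funext n
    rw [apply_eq_apply_zero_of_fwdDiff_eq_zero (fwdDiff_eq_zero_of_periodic hm hper hψ) n]
    simpa using hzero 0

end FwdDiff

section PolyMap

variable {G : Type*} [Group G]

def foldrLDiff (gs : List G) : (G → ℝ) →ₗ[ℝ] G → ℝ where
  toFun := gs.foldr lDiff
  map_add' ξ η := by
    induction gs with
    | nil => rfl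
    | cons g gs ih =>
      funext x
      simp only [List.foldr_cons, ih, lDiff, Pi.add_apply]
      ring
  map_smul' c ξ := by
    induction gs with
    | nil => rfl
    | cons g gs ih =>
      funext x
      simp only [List.foldr_cons, ih, lDiff, Pi.smul_apply, smul_eq_mul, RingHom.id_apply]
      ring

variable (G) in
def polyLe (d : ℕ) : Submodule ℝ (G → ℝ) :=
  ⨅ (gs : List G) (_ : gs.length = d + 1), LinearMap.ker (foldrLDiff gs)

theorem mem_polyLe {d : ℕ} {ξ : G → ℝ} : ξ ∈ polyLe G d ↔ IsPolyLe d ξ := by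
  simp only [polyLe, Submodule.mem_iInf, LinearMap.mem_ker]
  rfl

theorem polyLe_mono : Monotone (polyLe G) := fun d e hde ξ hξ => by
  rw [mem_polyLe] at hξ ⊢
  intro gs hgs
  rw [← List.take_append_drop (e - d) gs, List.foldr_append,
    hξ _ (by rw [List.length_drop]; omega)]
  exact map_zero (foldrLDiff _)

variable (G) in
def polySubmodule : Submodule ℝ (G → ℝ) := ⨆ d, polyLe G d

theorem mem_polySubmodule {ξ : G → ℝ} : ξ ∈ polySubmodule G ↔ IsPolyMap ξ := by
  simp only [polySubmodule, Submodule.mem_iSup_of_directed _ polyLe_mono.directed_le, mem_polyLe,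
    IsPolyMap]

theorem isPolyLe_const (c : ℝ) : IsPolyLe 0 (fun _ : G => c) := fun
  | [_], _ => by funext x; simp [lDiff]

theorem IsPolyLe.sub {d : ℕ} {ξ η : G → ℝ} (hξ : IsPolyLe d ξ) (hη : IsPolyLe d η) :
    IsPolyLe d (ξ - η) :=
  mem_polyLe.1 (sub_mem (mem_polyLe.2 hξ) (mem_polyLe.2 hη))

theorem foldr_lDiff_replicate_inv_apply_zpow (D : G → ℝ) (g : G) (k : ℕ) (n : ℤ) :
    (List.replicate k g⁻¹).foldr lDiff D (g ^ n) = (Δ_[1])^[k] (fun n : ℤ => D (g ^ n)) n := by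
  induction k generalizing n with
  | zero => rfl
  | succ k ih =>
    rw [List.replicate_succ, List.foldr_cons, Function.iterate_succ_apply']
    simp only [lDiff, fwdDiff, inv_inv, ← zpow_one_add, add_comm (1 : ℤ), ih]

theorem IsPolyLe.apply_zpow_eq_zero {d m : ℕ} {D : G → ℝ} (hD : IsPolyLe d D) (hm : m ≠ 0)
    {g : G} (hzero : ∀ k : ℕ, D ((g ^ m) ^ k) = 0) (n : ℤ) : D (g ^ n) = 0 := by
  have hψ : (Δ_[1])^[d + 1] (fun n : ℤ => D (g ^ n)) = 0 := by
    funext n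
    rw [← foldr_lDiff_replicate_inv_apply_zpow, hD _ (List.length_replicate ..)]
    rfl
  have hzero' : ∀ k : ℕ, D (g ^ ((m : ℤ) * k)) = 0 := fun k => by simpa [zpow_mul] using hzero k
  exact congrFun (eq_zero_of_fwdDiff_iter_eq_zero hm hzero' hψ) n

end PolyMap

theorem sum_apply_mul_apply_eq_zero {K ι X Y X' Y' : Type*} [Field K] [Fintype ι]
    {P : Submodule K (X → K)} {Q : Submodule K (Y → K)}
    (φ : P →ₗ[K] X' → K) (ψ : Q →ₗ[K] Y' → K) (e : ι → P) (f : ι → Q)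
    (hef : ∀ x y, ∑ i, (e i : X → K) x * (f i : Y → K) y = 0) (x' : X') (y' : Y') :
    ∑ i, φ (e i) x' * ψ (f i) y' = 0 := by
  classical
  set L := Fintype.linearCombination K f
  have hev : ∀ x, (fun i => (e i : X → K) x) ∈ LinearMap.ker L := fun x => by
    rw [LinearMap.mem_ker, Fintype.linearCombination_apply]
    ext y
    simpa using hef x y
  -- A functional vanishing on `ker L` gives a relation `∑ cᵢ • eᵢ = 0` in `P`, which `φ` preserves.
  have hv : (fun i => φ (e i) x') ∈ LinearMap.ker L := by
    rw [← Subspace.forall_mem_dualAnnihilator_apply_eq_zero_iff]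
    intro χ hχ
    rw [Submodule.mem_dualAnnihilator] at hχ
    have hcomb : ∑ i, χ (fun j => if i = j then 1 else 0) • e i = 0 := by
      ext x
      have := hχ _ (hev x)
      rw [LinearMap.pi_apply_eq_sum_univ] at this
      simpa [mul_comm] using this
    have := congrFun (congrArg φ hcomb) x'
    rw [LinearMap.pi_apply_eq_sum_univ]
    simpa [mul_comm] using this
  have := congrFun (congrArg ψ (LinearMap.mem_ker.1 hv)) y'
  simpa [L, Fintype.linearCombination_apply] using this

namespace IsGoodHom

variable {G H : Type*} [Group G] [Group H] {Ψ Ψ₁ Ψ₂ : (G → ℝ) → (H → ℝ)}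

def linearMap (hΨ : IsGoodHom Ψ) : polySubmodule G →ₗ[ℝ] H → ℝ where
  toFun ξ := Ψ ξ
  map_add' ξ η := hΨ.1 ξ η (mem_polySubmodule.1 ξ.2) (mem_polySubmodule.1 η.2)
  map_smul' c ξ := hΨ.2.1 c ξ (mem_polySubmodule.1 ξ.2)

@[simp]
theorem linearMap_apply (hΨ : IsGoodHom Ψ) (ξ : polySubmodule G) : hΨ.linearMap ξ = Ψ ξ := rfl

theorem apply_one (hΨ : IsGoodHom Ψ) {ξ : G → ℝ} (hξ : IsPolyMap ξ) : Ψ ξ 1 = ξ 1 := by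
  obtain ⟨hadd, hsmul, hone, hunital, -⟩ := hΨ
  have hone_poly : IsPolyMap (1 : G → ℝ) := ⟨0, isPolyLe_const 1⟩
  have hconst_poly : IsPolyMap (ξ 1 • 1 : G → ℝ) :=
    mem_polySubmodule.1 (Submodule.smul_mem _ _ (mem_polySubmodule.2 hone_poly))
  have hpoly : IsPolyMap (ξ - ξ 1 • 1) :=
    mem_polySubmodule.1 (sub_mem (mem_polySubmodule.2 hξ) (mem_polySubmodule.2 hconst_poly))
  calc Ψ ξ 1 = Ψ (ξ - ξ 1 • 1) 1 + Ψ (ξ 1 • 1) 1 := by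
        rw [← Pi.add_apply, ← hadd _ _ hpoly hconst_poly, sub_add_cancel]
    _ = ξ 1 := by rw [hunital _ hpoly (by simp), hsmul _ _ hone_poly, hone]; simp

theorem apply_mul_eq_sum (hΨ : IsGoodHom Ψ) {ξ : G → ℝ} (hξ : IsPolyMap ξ) {ι : Type*}
    [Fintype ι] (a b : ι → G → ℝ) (ha : ∀ i, IsPolyMap (a i)) (hb : ∀ i, IsPolyMap (b i))
    (hab : ∀ g g', ξ (g * g') = ∑ i, a i g * b i g') (h h' : H) :
    Ψ ξ (h * h') = ∑ i, Ψ (a i) h * Ψ (b i) h' := by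
  have ⟨_, _, _, _, _, _, hcomul⟩ := hΨ
  obtain ⟨n, a₀, b₀, ha₀, hb₀, hab₀, hΨ₀⟩ := hcomul ξ hξ
  let e : ι ⊕ Fin n → polySubmodule G := Sum.elim
    (fun i => ⟨a i, mem_polySubmodule.2 (ha i)⟩) (fun i => ⟨a₀ i, mem_polySubmodule.2 (ha₀ i)⟩)
  let f : ι ⊕ Fin n → polySubmodule G := Sum.elim
    (fun i => ⟨b i, mem_polySubmodule.2 (hb i)⟩) (fun i => -⟨b₀ i, mem_polySubmodule.2 (hb₀ i)⟩)
  have := sum_apply_mul_apply_eq_zero hΨ.linearMap hΨ.linearMap e f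
    (fun g g' => by simp [e, f, Fintype.sum_sum_type, ← hab, ← hab₀]) h h'
  simp only [e, f, Fintype.sum_sum_type, Sum.elim_inl, Sum.elim_inr, map_neg] at this
  simp only [linearMap_apply, Pi.neg_apply, mul_neg, Finset.sum_neg_distrib, ← hΨ₀] at this
  linarith

end IsGoodHom

section Agreement

variable {G H : Type*} [Group G] [Group H] {Ψ₁ Ψ₂ : (G → ℝ) → (H → ℝ)}

def agreementSubmonoid (h₁ : IsGoodHom Ψ₁) (h₂ : IsGoodHom Ψ₂) : Submonoid H where
  carrier := {h | ∀ ξ, IsPolyMap ξ → Ψ₁ ξ h = Ψ₂ ξ h}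
  one_mem' ξ hξ := (h₁.apply_one hξ).trans (h₂.apply_one hξ).symm
  mul_mem' {x y} hx hy ξ hξ := by
    have ⟨_, _, _, _, _, _, hcomul⟩ := h₁
    obtain ⟨n, a, b, ha, hb, hab, hΨ₁⟩ := hcomul ξ hξ
    rw [hΨ₁, h₂.apply_mul_eq_sum hξ a b ha hb hab]
    exact Finset.sum_congr rfl fun i _ => by rw [hx _ (ha i), hy _ (hb i)]

theorem zpow_mem_agreementSubmonoid (h₁ : IsGoodHom Ψ₁) (h₂ : IsGoodHom Ψ₂) {g : H} {m : ℕ}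
    (hm : m ≠ 0) (hg : g ^ m ∈ agreementSubmonoid h₁ h₂) (n : ℤ) :
    g ^ n ∈ agreementSubmonoid h₁ h₂ := by
  rintro ξ ⟨d, hξ⟩
  have ⟨_, _, _, _, _, hdeg₁, _⟩ := h₁
  have ⟨_, _, _, _, _, hdeg₂, _⟩ := h₂
  have hD : IsPolyLe d (Ψ₁ ξ - Ψ₂ ξ) := (hdeg₁ d ξ hξ).sub (hdeg₂ d ξ hξ)
  exact sub_eq_zero.1 <|
    hD.apply_zpow_eq_zero hm (fun k => sub_eq_zero.2 (pow_mem hg k ξ ⟨d, hξ⟩)) n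

def agreementSubgroup (h₁ : IsGoodHom Ψ₁) (h₂ : IsGoodHom Ψ₂) : Subgroup H where
  toSubmonoid := agreementSubmonoid h₁ h₂
  inv_mem' {g} hg := by
    simpa using zpow_mem_agreementSubmonoid h₁ h₂ one_ne_zero (by simpa using hg) (-1)

end Agreement

theorem stmt18_general {G H : Type*} [Group G] [Group H]
    (T : Set H) (hT : (Subgroup.closure T).FiniteIndex)
    (Ψ₁ Ψ₂ : (G → ℝ) → (H → ℝ)) (h₁ : IsGoodHom Ψ₁) (h₂ : IsGoodHom Ψ₂)
    (hagree : ∀ ξ : G → ℝ, IsPolyMap ξ → ∀ t ∈ T, Ψ₁ ξ t = Ψ₂ ξ t) :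
    ∀ ξ : G → ℝ, IsPolyMap ξ → Ψ₁ ξ = Ψ₂ ξ := by
  intro ξ hξ
  funext h
  have hT_le : Subgroup.closure T ≤ agreementSubgroup h₁ h₂ :=
    (Subgroup.closure_le _).2 fun t ht ξ hξ => hagree ξ hξ t ht
  obtain ⟨m, hm, -, hpow⟩ := Subgroup.exists_pow_mem_of_index_ne_zero hT.index_ne_zero h
  simpa using zpow_mem_agreementSubmonoid h₁ h₂ hm.ne' (hT_le hpow) 1 ξ hξ

/-- Uniqueness of strongly unital, co-multiplicative, degree-preserving algebra
homomorphisms of polynomial algebras of finitely generated torsion-free nilpotent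
groups: two such maps agreeing at every point of a set `T ⊆ H` generating a
finite-index subgroup agree on all of `Pol(G)`. -/
theorem stmt18 {G H : Type*} [Group G] [Group H]
    [Group.FG G] (hGtf : Monoid.IsTorsionFree G) [Group.IsNilpotent G]
    [Group.FG H] (hHtf : Monoid.IsTorsionFree H) [Group.IsNilpotent H]
    (T : Set H) (hT : (Subgroup.closure T).FiniteIndex)
    (Ψ₁ Ψ₂ : (G → ℝ) → (H → ℝ)) (h₁ : IsGoodHom Ψ₁) (h₂ : IsGoodHom Ψ₂)
    (hagree : ∀ ξ : G → ℝ, IsPolyMap ξ → ∀ t ∈ T, Ψ₁ ξ t = Ψ₂ ξ t) :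
    ∀ ξ : G → ℝ, IsPolyMap ξ → Ψ₁ ξ = Ψ₂ ξ :=
  stmt18_general T hT Ψ₁ Ψ₂ h₁ h₂ hagree
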